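/- The C*-algebra generated by the self-adjoint parts of the monotone annihilators coincides with the whole monotone C*-algebra: the norm closure of the unital *-subalgebra of B(F_m) generated by {s_i = a_i + a_i† : i ∈ ℤ} equals ℜ_m. -/

import Mathlib

open scoped InnerProductSpace ComplexOrder
open ContinuousLinearMap Filter

noncomputable section

/-- The monotone Fock space `F_m = ℓ²(Finset ℤ)`, the Hilbert space of square-summable
complex families indexed by the finite subsets of `ℤ`. -/
abbrev Fm : Type := lp (fun _ : Finset ℤ => ℂ) 2

/-- The canonical orthonormal basis vector `e_A`, for `A` a finite subset of `ℤ`;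
`e ∅` is the vacuum vector `Ω`. -/
noncomputable def e (A : Finset ℤ) : Fm := lp.single 2 A 1

/-- `adag` is the family of monotone creation operators: `adag i` sends `e A` to
`e (A ∪ {i})` if `A = ∅` or `i < min A` (equivalently, `i < j` for all `j ∈ A`),
and to `0` otherwise. -/
def CreatesOn (adag : ℤ → (Fm →L[ℂ] Fm)) : Prop :=
  ∀ (i : ℤ) (A : Finset ℤ),
    adag i (e A) = if ∀ j ∈ A, i < j then e (insert i A) else 0

/-- `a` is the family of monotone annihilation operators: `a i` sends `e A` to
`e (A \ {i})` if `A ≠ ∅` and `i = min A` (equivalently, `i ∈ A` and `i ≤ j` for all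
`j ∈ A`), and to `0` otherwise. -/
def AnnihilatesOn (a : ℤ → (Fm →L[ℂ] Fm)) : Prop :=
  ∀ (i : ℤ) (A : Finset ℤ),
    a i (e A) = if i ∈ A ∧ ∀ j ∈ A, i ≤ j then e (A.erase i) else 0

/-- `ℜ_m`: the monotone C*-algebra, i.e. the norm closure of the unital *-subalgebra
of `B(F_m)` generated by the monotone annihilators `{a_i : i ∈ ℤ}`. -/
def Rm (a : ℤ → (Fm →L[ℂ] Fm)) : Set (Fm →L[ℂ] Fm) :=
  closure (StarAlgebra.adjoin ℂ (Set.range a) : Set (Fm →L[ℂ] Fm))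

/-! Since `adag i = star (a i)`, each `s i = a i + adag i` lies in the *-algebra generated by
the `a j`. Conversely, `s k` inserts or erases `k` in `e A` when `k ≤ min A` and kills `e A`
when `min A < k`; hence `s (i + 1) ^ 2` fixes `e B` when `i < min B` and kills it when `i ∈ B`,
which gives `s (i + 1) ^ 2 * s i = a i`. -/

lemma Finset.mem_and_forall_le_and_erase_eq_iff {α : Type*} [LinearOrder α] {i : α}
    {A B : Finset α} :
    ((i ∈ B ∧ ∀ j ∈ B, i ≤ j) ∧ B.erase i = A) ↔ ((∀ j ∈ A, i < j) ∧ B = insert i A) := by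
  constructor
  · rintro ⟨⟨hiB, hmin⟩, rfl⟩
    refine ⟨fun j hj => ?_, (insert_erase hiB).symm⟩
    obtain ⟨hji, hjB⟩ := mem_erase.mp hj
    exact (hmin j hjB).lt_of_ne' hji
  · rintro ⟨hlt, rfl⟩
    refine ⟨⟨mem_insert_self i A, fun j hj => ?_⟩, erase_insert fun hiA => (hlt i hiA).false⟩
    rcases mem_insert.mp hj with rfl | hjA
    exacts [le_rfl, (hlt j hjA).le]

lemma ext_e {T S : Fm →L[ℂ] Fm} (h : ∀ A, T (e A) = S (e A)) : T = S :=
  lp.ext_continuousLinearMap (by norm_num) fun A => ContinuousLinearMap.ext_ring (h A)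

lemma inner_e_left (B : Finset ℤ) (x : Fm) : ⟪e B, x⟫_ℂ = x B := by
  simp [e, lp.inner_single_left]

lemma inner_e_e (A B : Finset ℤ) : ⟪e B, e A⟫_ℂ = if B = A then 1 else 0 := by
  rw [inner_e_left, e, lp.single_apply, Pi.single_apply]

section

variable {a adag : ℤ → (Fm →L[ℂ] Fm)}

lemma star_eq_of_annihilatesOn_of_createsOn (ha : AnnihilatesOn a) (hadag : CreatesOn adag)
    (i : ℤ) : star (a i) = adag i := by
  refine ext_e fun A => lp.ext (funext fun B => ?_)
  rw [← inner_e_left, ← inner_e_left, star_eq_adjoint, adjoint_inner_right, ha, hadag]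
  simp only [apply_ite (inner ℂ (e B)), apply_ite (fun x : Fm => ⟪x, e A⟫_ℂ), inner_e_e,
    inner_zero_left, inner_zero_right, ← ite_and, Finset.mem_and_forall_le_and_erase_eq_iff]

lemma add_apply_e_of_forall_lt (ha : AnnihilatesOn a) (hadag : CreatesOn adag) {i : ℤ}
    {A : Finset ℤ} (h : ∀ j ∈ A, i < j) : (a i + adag i) (e A) = e (insert i A) := by
  have : ¬ (i ∈ A ∧ ∀ j ∈ A, i ≤ j) := fun h' => (h i h'.1).false
  rw [add_apply, ha, hadag, if_neg this, if_pos h, zero_add]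

lemma add_apply_e_of_mem_of_forall_le (ha : AnnihilatesOn a) (hadag : CreatesOn adag) {i : ℤ}
    {A : Finset ℤ} (hiA : i ∈ A) (h : ∀ j ∈ A, i ≤ j) : (a i + adag i) (e A) = e (A.erase i) := by
  have : ¬ ∀ j ∈ A, i < j := fun h' => (h' i hiA).false
  rw [add_apply, ha, hadag, if_pos ⟨hiA, h⟩, if_neg this, add_zero]

lemma add_apply_e_of_lt_of_mem (ha : AnnihilatesOn a) (hadag : CreatesOn adag) {i j : ℤ}
    {A : Finset ℤ} (hjA : j ∈ A) (hji : j < i) : (a i + adag i) (e A) = 0 := by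
  have h₁ : ¬ (i ∈ A ∧ ∀ k ∈ A, i ≤ k) := fun h => (h.2 j hjA).not_gt hji
  have h₂ : ¬ ∀ k ∈ A, i < k := fun h => (h j hjA).asymm hji
  rw [add_apply, ha, hadag, if_neg h₁, if_neg h₂, add_zero]

lemma add_sq_apply_e (ha : AnnihilatesOn a) (hadag : CreatesOn adag) {i : ℤ}
    {A : Finset ℤ} (h : ∀ j ∈ A, i ≤ j) : ((a i + adag i) ^ 2) (e A) = e A := by
  rw [sq, mul_apply_eq_comp]
  by_cases hiA : i ∈ A
  · have hlt : ∀ j ∈ A.erase i, i < j := fun j hj =>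
      (h j (Finset.mem_of_mem_erase hj)).lt_of_ne' (Finset.ne_of_mem_erase hj)
    rw [add_apply_e_of_mem_of_forall_le ha hadag hiA h, add_apply_e_of_forall_lt ha hadag hlt,
      Finset.insert_erase hiA]
  · have hlt : ∀ j ∈ A, i < j := fun j hj => (h j hj).lt_of_ne fun hij => hiA (hij ▸ hj)
    rw [add_apply_e_of_forall_lt ha hadag hlt,
      add_apply_e_of_mem_of_forall_le ha hadag (Finset.mem_insert_self i A) ?_,
      Finset.erase_insert hiA]
    simpa using h

lemma add_succ_sq_mul_add (ha : AnnihilatesOn a) (hadag : CreatesOn adag) (i : ℤ) :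
    (a (i + 1) + adag (i + 1)) ^ 2 * (a i + adag i) = a i := by
  refine ext_e fun A => ?_
  rw [mul_apply_eq_comp]
  by_cases hmin : i ∈ A ∧ ∀ j ∈ A, i ≤ j
  · have hle : ∀ j ∈ A.erase i, i + 1 ≤ j := fun j hj =>
      (hmin.2 j (Finset.mem_of_mem_erase hj)).lt_of_ne' (Finset.ne_of_mem_erase hj)
    rw [add_apply_e_of_mem_of_forall_le ha hadag hmin.1 hmin.2, add_sq_apply_e ha hadag hle,
      ha, if_pos hmin]
  by_cases hlt : ∀ j ∈ A, i < j
  · rw [add_apply_e_of_forall_lt ha hadag hlt, sq, mul_apply_eq_comp,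
      add_apply_e_of_lt_of_mem ha hadag (Finset.mem_insert_self i A) (lt_add_one i), map_zero,
      ha, if_neg hmin]
  · rw [add_apply, ha, hadag, if_neg hmin, if_neg hlt, add_zero, map_zero]

end

/-- Proposition 4.11 (Proposition `invmon2`): the C*-algebra generated by the
self-adjoint parts `s_i = a_i + a_i†` of the monotone annihilators coincides with the
whole monotone C*-algebra `ℜ_m`: the norm closure of the unital *-subalgebra generated
by `{s_i : i ∈ ℤ}` equals `ℜ_m`. -/
theorem monotone_selfadjoint_parts_generate
    (a adag : ℤ → (Fm →L[ℂ] Fm))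
    (ha : AnnihilatesOn a) (hadag : CreatesOn adag) :
    closure ((StarAlgebra.adjoin ℂ
        (Set.range fun i : ℤ => a i + adag i) :
        StarSubalgebra ℂ (Fm →L[ℂ] Fm)) : Set (Fm →L[ℂ] Fm)) = Rm a := by
  have mem_a (i : ℤ) : a i ∈ StarAlgebra.adjoin ℂ (Set.range a) :=
    StarAlgebra.subset_adjoin ℂ _ ⟨i, rfl⟩
  have mem_s (i : ℤ) : a i + adag i ∈ StarAlgebra.adjoin ℂ (Set.range fun i => a i + adag i) :=
    StarAlgebra.subset_adjoin ℂ _ ⟨i, rfl⟩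
  refine congrArg (closure ∘ SetLike.coe) (le_antisymm ?_ ?_)
  · refine StarAlgebra.adjoin_le fun _ ⟨i, hi⟩ => hi ▸ add_mem (mem_a i) ?_
    exact star_eq_of_annihilatesOn_of_createsOn ha hadag i ▸ star_mem (mem_a i)
  · refine StarAlgebra.adjoin_le fun _ ⟨i, hi⟩ => hi ▸ ?_
    rw [← add_succ_sq_mul_add ha hadag i]
    exact mul_mem (pow_mem (mem_s (i + 1)) 2) (mem_s i)

end
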